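/- Fix a point p_i and a uniformly random permutation p_1, …, p_n. A split-above event E'_{i,j} occurs if there exists a bunch B near p_i in P_j (for fixed constants α, β) such that p_j is the unique closest point of P_j \ B to the first-inserted point of B. If the number of bunches near p_i is at most d, then Σ_{j=2}^{n} Pr[E'_{i,j}] ≤ d·Σ_{j=2}^{n} 1/(j−1) = O(d·log n). -/

import Mathlib

/-!
Backward analysis. Fix `j`. Moving the point inserted at time `j` back to a time `t ≤ j`
(all other points keeping their relative order) does not change `P_j`, hence not the
bunches of `P_j`; nor does it change the first point of a bunch `B` not containing the moved
point. So if `E'_{i,j}` holds for `σ` with bunch `B`, the pair (moved permutation, `B`)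
determines the first point of `B`, then the moved point as the unique point of `P_j \ B`
nearest to it, then `t` and `σ`. This injection gives
`(j + 1) · #{σ | E'_{i,j}} ≤ d · n!`, and summing over `j` gives the harmonic bound.
-/

/-- `B ⊆ Pj` is a bunch near `pi` with center `x ∈ B` (parameters `α`, `β`, `τ`). -/
def IsBunch {M : Type*} [MetricSpace M] (Pj : Set M) (pi : M) (α β τ : ℝ)
    (B : Set M) (x : M) : Prop :=
  x ∈ B ∧
  B = Metric.closedBall x (α * dist pi x) ∩ Pj ∧
  (∀ y ∈ Pj, dist x y ≤ β * dist pi x → dist x y ≤ α * dist pi x) ∧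
  dist pi x ≤ (2 * τ * (τ - 1) / (τ + 2)) * Metric.infDist pi Pj

/-- The prefix `P_j` of the permutation `σ`: points at positions `≤ j`. -/
def prefixSet {n : ℕ} {M : Type*} (pts : Fin n → M) (σ : Equiv.Perm (Fin n))
    (j : Fin n) : Set M :=
  {y | ∃ t : Fin n, t ≤ j ∧ y = pts (σ t)}

/-- Split-above event `E'_{i,j}`: there is a bunch `B` near the fixed point `q` in the
prefix `P_j` such that the point inserted at time `j` lies outside `B` and is the unique
closest point of `P_j \ B` to the first-inserted point of `B`. -/
def SplitAboveEvent {n : ℕ} {M : Type*} [MetricSpace M] (pts : Fin n → M) (q : M)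
    (α β τ : ℝ) (σ : Equiv.Perm (Fin n)) (j : Fin n) : Prop :=
  ∃ (B : Set M) (x : M), IsBunch (prefixSet pts σ j) q α β τ B x ∧
    pts (σ j) ∈ prefixSet pts σ j ∧ pts (σ j) ∉ B ∧
    ∃ t0 : Fin n, t0 ≤ j ∧ pts (σ t0) ∈ B ∧
      (∀ t : Fin n, t ≤ j → pts (σ t) ∈ B → t0 ≤ t) ∧
      ∀ y ∈ prefixSet pts σ j, y ∉ B → y ≠ pts (σ j) →
        dist (pts (σ t0)) (pts (σ j)) < dist (pts (σ t0)) y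

open Finset Equiv

namespace Fin

variable {n : ℕ} {t j : Fin n}

theorem val_add_one_of_lt_of_lt [NeZero n] {a b : Fin n} (h : a < b) :
    ((a + 1 : Fin n) : ℕ) = a + 1 :=
  val_add_one_of_lt' (by omega)

theorem cycleIcc_le_iff [NeZero n] (ht : t ≤ j) {k : Fin n} : cycleIcc t j k ≤ j ↔ k ≤ j := by
  rcases lt_or_ge j k with hjk | hkj
  · simp [cycleIcc_of_gt hjk, hjk.not_ge]
  · rcases lt_or_ge k t with hkt | htk
    · simp [cycleIcc_of_lt hkt, hkj]
    · simp only [cycleIcc_of_le_of_le htk hkj, hkj, iff_true]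
      split_ifs with h
      · exact ht
      · have hkj' := hkj.lt_of_ne h
        rw [le_def, val_add_one_of_lt_of_lt hkj']
        exact hkj'

theorem monotoneOn_cycleIcc [NeZero n] : MonotoneOn (cycleIcc t j) (Set.Iio j) := by
  intro a ha b hb hab
  have hb1 := val_add_one_of_lt_of_lt (Set.mem_Iio.1 hb)
  rcases lt_or_ge a t with hat | hta
  · rw [cycleIcc_of_lt hat]
    rcases lt_or_ge b t with hbt | htb
    · rwa [cycleIcc_of_lt hbt]
    · rw [cycleIcc_of_ge_of_lt htb hb, le_def, hb1]
      exact (le_def.1 hab).trans (Nat.le_succ _)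
  · rw [cycleIcc_of_ge_of_lt hta ha, cycleIcc_of_ge_of_lt (hta.trans hab) hb, le_def, hb1,
      val_add_one_of_lt_of_lt (Set.mem_Iio.1 ha)]
    exact Nat.succ_le_succ hab

theorem cycleIcc_inv_apply_self [NeZero n] (ht : t ≤ j) : (cycleIcc t j)⁻¹ t = j := by
  rw [Perm.inv_eq_iff_eq, cycleIcc_of_last ht]

end Fin

open Fin

section

variable {n : ℕ} {M : Type*} (pts : Fin n → M)

theorem mem_prefixSet_self (σ : Perm (Fin n)) (j : Fin n) : pts (σ j) ∈ prefixSet pts σ j :=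
  ⟨j, le_rfl, rfl⟩

theorem prefixSet_finite (σ : Perm (Fin n)) (j : Fin n) : (prefixSet pts σ j).Finite :=
  (Set.finite_range pts).subset fun _ ⟨t, _, hy⟩ => ⟨σ t, hy.symm⟩

theorem prefixSet_mul_of_forall_le_iff (σ : Perm (Fin n)) {π : Perm (Fin n)} {j : Fin n}
    (hπ : ∀ k, π k ≤ j ↔ k ≤ j) : prefixSet pts (σ * π) j = prefixSet pts σ j := by
  ext y
  constructor
  · rintro ⟨s, hs, rfl⟩
    exact ⟨π s, (hπ s).2 hs, rfl⟩
  · rintro ⟨s, hs, rfl⟩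
    refine ⟨π⁻¹ s, (hπ _).1 (by simpa using hs), ?_⟩
    simp

theorem prefixSet_mul_cycleIcc_inv (σ : Perm (Fin n)) {t j : Fin n} (ht : t ≤ j) :
    prefixSet pts (σ * (cycleIcc t j)⁻¹) j = prefixSet pts σ j := by
  have : NeZero n := ⟨j.pos.ne'⟩
  refine prefixSet_mul_of_forall_le_iff pts σ fun k => ?_
  rw [← cycleIcc_le_iff ht, Perm.coe_inv, apply_symm_apply]

theorem isLeast_mul_cycleIcc_inv {σ : Perm (Fin n)} {t j t₀ : Fin n} {B : Set M}
    (ht : t ≤ j) (hj : pts (σ j) ∉ B) (h₀ : IsLeast {s | s ≤ j ∧ pts (σ s) ∈ B} t₀) :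
    IsLeast {s | s ≤ j ∧ pts ((σ * (cycleIcc t j)⁻¹) s) ∈ B} (cycleIcc t j t₀) := by
  have : NeZero n := ⟨j.pos.ne'⟩
  refine ⟨⟨(cycleIcc_le_iff ht).2 h₀.1.1, by simpa using h₀.1.2⟩, ?_⟩
  rintro s ⟨hs, hsB⟩
  set r := (cycleIcc t j)⁻¹ s
  have hr : r < j := by
    refine lt_of_le_of_ne ((cycleIcc_le_iff ht).1 (by simpa [r] using hs)) ?_
    rintro hrj
    exact hj (hrj ▸ hsB)
  have h₀r := h₀.2 ⟨hr.le, hsB⟩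
  simpa [r] using monotoneOn_cycleIcc (t := t) (h₀r.trans_lt hr) hr h₀r

end

section SplitAbove

variable {n : ℕ} {M : Type*} [MetricSpace M] {pts : Fin n → M}

def SplitsAbove (pts : Fin n → M) (σ : Perm (Fin n)) (j : Fin n) (B : Set M) : Prop :=
  pts (σ j) ∉ B ∧ ∃ t₀, IsLeast {s | s ≤ j ∧ pts (σ s) ∈ B} t₀ ∧
    ∀ y ∈ prefixSet pts σ j, y ∉ B → y ≠ pts (σ j) →
      dist (pts (σ t₀)) (pts (σ j)) < dist (pts (σ t₀)) y

theorem SplitAboveEvent.exists_splitsAbove {q : M} {α β τ : ℝ} {σ : Perm (Fin n)} {j : Fin n}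
    (h : SplitAboveEvent pts q α β τ σ j) :
    ∃ B, (∃ x, IsBunch (prefixSet pts σ j) q α β τ B x) ∧ SplitsAbove pts σ j B := by
  obtain ⟨B, x, hB, -, hj, t₀, ht₀, ht₀B, hmin, hnear⟩ := h
  exact ⟨B, ⟨x, hB⟩, hj, t₀, ⟨⟨ht₀, ht₀B⟩, fun s hs => hmin s hs.1 hs.2⟩, hnear⟩

theorem eq_of_mul_cycleIcc_inv_eq (hinj : Function.Injective pts) {σ σ' : Perm (Fin n)}
    {t t' j : Fin n} {B : Set M} (ht : t ≤ j) (ht' : t' ≤ j)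
    (hσ : SplitsAbove pts σ j B) (hσ' : SplitsAbove pts σ' j B)
    (h : σ * (cycleIcc t j)⁻¹ = σ' * (cycleIcc t' j)⁻¹) : σ = σ' ∧ t = t' := by
  have : NeZero n := ⟨j.pos.ne'⟩
  obtain ⟨hj, t₀, h₀, hnear⟩ := hσ
  obtain ⟨hj', t₀', h₀', hnear'⟩ := hσ'
  have hprefix : prefixSet pts σ' j = prefixSet pts σ j := by
    rw [← prefixSet_mul_cycleIcc_inv pts σ' ht', ← h, prefixSet_mul_cycleIcc_inv pts σ ht]
  have hfirst : pts (σ t₀) = pts (σ' t₀') := by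
    have hpos := (isLeast_mul_cycleIcc_inv pts ht hj h₀).unique
      (h ▸ isLeast_mul_cycleIcc_inv pts ht' hj' h₀')
    calc pts (σ t₀) = pts ((σ * (cycleIcc t j)⁻¹) (cycleIcc t j t₀)) := by simp
      _ = pts (σ' t₀') := by rw [hpos, h]; simp
  have hlast : σ j = σ' j := by
    by_contra hne
    have h₁ := hnear _ (hprefix ▸ mem_prefixSet_self pts σ' j) hj' (hinj.ne hne).symm
    have h₂ := hnear' _ (hprefix ▸ mem_prefixSet_self pts σ j) hj (hinj.ne hne)
    rw [← hfirst] at h₂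
    exact lt_asymm h₁ h₂
  have htt : t = t' := (σ * (cycleIcc t j)⁻¹).injective <| calc
    (σ * (cycleIcc t j)⁻¹) t = σ j := by rw [Perm.mul_apply, cycleIcc_inv_apply_self ht]
    _ = (σ' * (cycleIcc t' j)⁻¹) t' := by rw [Perm.mul_apply, cycleIcc_inv_apply_self ht', hlast]
    _ = (σ * (cycleIcc t j)⁻¹) t' := by rw [h]
  subst htt
  exact ⟨mul_right_cancel h, rfl⟩

end SplitAbove

theorem setOf_isBunch_finite {M : Type*} [MetricSpace M] {S : Set M} (hS : S.Finite) (q : M)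
    (α β τ : ℝ) : {B : Set M | ∃ x, IsBunch S q α β τ B x}.Finite :=
  (hS.image fun x => Metric.closedBall x (α * dist q x) ∩ S).subset
    fun _ ⟨x, hx, hB, _⟩ => ⟨x, (hB ▸ hx).2, hB.symm⟩

open scoped Nat Classical in
theorem card_splitAboveEvent_mul_le {n : ℕ} {M : Type*} [MetricSpace M] {pts : Fin n → M}
    (hinj : Function.Injective pts) (q : M) (α β τ : ℝ) {d : ℕ}
    (hd : ∀ (σ : Perm (Fin n)) (j : Fin n),
      {B : Set M | ∃ x, IsBunch (prefixSet pts σ j) q α β τ B x}.ncard ≤ d)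
    (j : Fin n) :
    #{σ | SplitAboveEvent pts q α β τ σ j} * ((j : ℕ) + 1) ≤ d * n ! := by
  set A : Finset (Perm (Fin n)) := {σ | SplitAboveEvent pts q α β τ σ j}
  have hwit : ∀ σ ∈ A, ∃ B, (∃ x, IsBunch (prefixSet pts σ j) q α β τ B x) ∧
      SplitsAbove pts σ j B := fun σ hσ => (mem_filter.1 hσ).2.exists_splitsAbove
  choose! B hbunch hsplit using hwit
  let bunchesOf (π : Perm (Fin n)) : Finset (Set M) :=
    (setOf_isBunch_finite (prefixSet_finite pts π j) q α β τ).toFinset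
  calc #A * ((j : ℕ) + 1) = #(A ×ˢ Iic j) := by rw [card_product, card_Iic]
    _ ≤ #(univ.sigma bunchesOf) := by
      refine card_le_card_of_injOn (fun p => ⟨p.1 * (cycleIcc p.2 j)⁻¹, B p.1⟩) ?_ ?_
      · rintro ⟨σ, t⟩ hσt
        obtain ⟨hσ, ht⟩ := mem_product.1 hσt
        simpa [bunchesOf, prefixSet_mul_cycleIcc_inv pts σ (mem_Iic.1 ht)] using hbunch σ hσ
      · rintro ⟨σ, t⟩ hσt ⟨σ', t'⟩ hσt' heq
        obtain ⟨hσ, ht⟩ := mem_product.1 hσt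
        obtain ⟨hσ', ht'⟩ := mem_product.1 hσt'
        obtain ⟨hπ, hB⟩ := Sigma.mk.inj_iff.1 heq
        have := eq_of_mul_cycleIcc_inv_eq hinj (mem_Iic.1 ht) (mem_Iic.1 ht') (hsplit σ hσ)
          (eq_of_heq hB ▸ hsplit σ' hσ') hπ
        exact Prod.ext this.1 this.2
    _ = ∑ π, {B : Set M | ∃ x, IsBunch (prefixSet pts π j) q α β τ B x}.ncard := by
      simp only [card_sigma, bunchesOf, ← Set.ncard_eq_toFinset_card]
    _ ≤ d * n ! := by
      simpa [mul_comm, Fintype.card_perm] using sum_le_sum fun π (_ : π ∈ univ) => hd π j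

-- The `j = 0` term is `1 / 0 = 0`.
theorem sum_fin_one_div_val (n : ℕ) :
    ∑ j : Fin n, (1 : ℝ) / (j : ℕ) = ∑ m ∈ range (n - 1), (1 : ℝ) / (m + 1) := by
  cases n with
  | zero => simp
  | succ n =>
    simpa [Fin.sum_univ_succ] using Fin.sum_univ_eq_sum_range (fun m => (1 : ℝ) / (m + 1)) n

open scoped Nat Classical in
theorem card_splitAboveEvent_le {n : ℕ} {M : Type*} [MetricSpace M] {pts : Fin n → M}
    (hinj : Function.Injective pts) (q : M) (α β τ : ℝ) {d : ℕ}
    (hd : ∀ (σ : Perm (Fin n)) (j : Fin n),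
      {B : Set M | ∃ x, IsBunch (prefixSet pts σ j) q α β τ B x}.ncard ≤ d)
    (j : Fin n) :
    (#{σ | 1 ≤ (j : ℕ) ∧ SplitAboveEvent pts q α β τ σ j} : ℝ) ≤ n ! * (d * (1 / (j : ℕ))) := by
  rcases Nat.eq_zero_or_pos j with hj | hj
  · simp [hj]
  have hle : #{σ | 1 ≤ (j : ℕ) ∧ SplitAboveEvent pts q α β τ σ j} * (j : ℕ) ≤ d * n ! :=
    calc _ ≤ #{σ | SplitAboveEvent pts q α β τ σ j} * ((j : ℕ) + 1) := by
          gcongr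
          · exact And.right
          · exact Nat.le_succ _
      _ ≤ d * n ! := card_splitAboveEvent_mul_le hinj q α β τ hd j
  rw [mul_one_div, ← mul_div_assoc, le_div_iff₀ (by exact_mod_cast hj)]
  exact_mod_cast hle.trans_eq (mul_comm _ _)

theorem expected_split_above_events_general {n : ℕ} {M : Type*} [MetricSpace M]
    (pts : Fin n → M) (hinj : Function.Injective pts)
    (q : M)
    (α β τ : ℝ)
    (d : ℕ)
    (hd : ∀ (σ : Equiv.Perm (Fin n)) (j : Fin n),
      ({B : Set M | ∃ x, IsBunch (prefixSet pts σ j) q α β τ B x}).ncard ≤ d) :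
    ∑ σ : Equiv.Perm (Fin n),
      (({j : Fin n | 1 ≤ (j : ℕ) ∧ SplitAboveEvent pts q α β τ σ j}).ncard : ℝ)
      ≤ (n.factorial : ℝ) * (d * ∑ m ∈ Finset.range (n - 1), (1 : ℝ) / (m + 1)) := by
  classical
  have hswap :
      ∑ σ : Perm (Fin n), {j : Fin n | 1 ≤ (j : ℕ) ∧ SplitAboveEvent pts q α β τ σ j}.ncard =
        ∑ j : Fin n, #{σ | 1 ≤ (j : ℕ) ∧ SplitAboveEvent pts q α β τ σ j} := by
    simp only [Set.ncard_eq_toFinset_card', Set.toFinset_ofPred]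
    exact sum_card_bipartiteAbove_eq_sum_card_bipartiteBelow _
  calc _ = ∑ j : Fin n, (#{σ | 1 ≤ (j : ℕ) ∧ SplitAboveEvent pts q α β τ σ j} : ℝ) := by
        exact_mod_cast hswap
    _ ≤ ∑ j : Fin n, (n.factorial * (d * (1 / (j : ℕ))) : ℝ) :=
        sum_le_sum fun j _ => card_splitAboveEvent_le hinj q α β τ hd j
    _ = _ := by rw [← mul_sum, ← mul_sum, sum_fin_one_div_val]

/-- If the number of bunches near the fixed point `q` in any prefix is at most `d`, then
the expected number of split-above events over positions `j ≥ 2` is at most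
`d·Σ_{j=2}^n 1/(j-1)`; stated without division by `n!`. -/
theorem expected_split_above_events {n : ℕ} {M : Type*} [MetricSpace M]
    (pts : Fin n → M) (hinj : Function.Injective pts)
    (q : M) (hq : q ∉ Set.range pts)
    (α β τ : ℝ) (hα : 0 < α) (hα2 : α ≤ 1 / 2) (hβ : 2 * α ≤ β)
    (d : ℕ)
    (hd : ∀ (σ : Equiv.Perm (Fin n)) (j : Fin n),
      ({B : Set M | ∃ x, IsBunch (prefixSet pts σ j) q α β τ B x}).ncard ≤ d) :
    ∑ σ : Equiv.Perm (Fin n),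
      (({j : Fin n | 1 ≤ (j : ℕ) ∧ SplitAboveEvent pts q α β τ σ j}).ncard : ℝ)
      ≤ (n.factorial : ℝ) * (d * ∑ m ∈ Finset.range (n - 1), (1 : ℝ) / (m + 1)) :=
  expected_split_above_events_general pts hinj q α β τ d hd
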